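/- arXiv:2605.11271 — 5 statements merged into one kernel-verified Lean document; each statement's English description precedes it below -/
import Mathlib

section
/- Let f, g : I → [0,∞) be continuous with g ≤ f. Then the Lorentzian length of any future-directed causal curve γ = (α,β) satisfies ∫ₐᵇ √((α')² − (f∘α)²(β')²) ≤ ∫ₐᵇ √((α')² − (g∘α)²(β')²), and hence the time separation functions satisfy τ_{−I×_f[0,L]}(p,q) ≤ τ_{−I×_g[0,L]}(p,q) for all causally related pairs (p,q). -/
open MeasureTheory Set

/-- An admissible curve in `I × [0,L]`: both components Lipschitz, with values
in `I` and `[0,L]` respectively. -/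
def Admissible (I : Set ℝ) (L a b : ℝ) (α β : ℝ → ℝ) : Prop :=
  a < b ∧ (∃ K : NNReal, LipschitzOnWith K α (Icc a b)) ∧
    (∃ K : NNReal, LipschitzOnWith K β (Icc a b)) ∧
    MapsTo α (Icc a b) I ∧ MapsTo β (Icc a b) (Icc 0 L)

/-- A future-directed causal curve for the warped metric `−dt² + f²dr²`. -/
def FutureCausal (I : Set ℝ) (L : ℝ) (f : ℝ → ℝ) (a b : ℝ) (α β : ℝ → ℝ) : Prop :=
  Admissible I L a b α β ∧
    ∀ᵐ t ∂(volume.restrict (Icc a b)),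
      0 ≤ deriv α t ∧ (f (α t)) ^ 2 * (deriv β t) ^ 2 ≤ (deriv α t) ^ 2

/-- Lorentzian length of a curve in the warped product `−I ×_f [0,L]`. -/
noncomputable def LorLen (f : ℝ → ℝ) (a b : ℝ) (α β : ℝ → ℝ) : ℝ :=
  ∫ t in a..b, Real.sqrt ((deriv α t) ^ 2 - (f (α t)) ^ 2 * (deriv β t) ^ 2)

/-- Time separation function of `−I ×_f [0,L]`: the supremum of Lorentzian lengths of
future-directed causal curves joining `p` to `q` (and `0` if there is no such curve). -/
noncomputable def tauW (I : Set ℝ) (L : ℝ) (f : ℝ → ℝ) (p q : ℝ × ℝ) : ℝ :=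
  sSup (insert 0 {r | ∃ a b α β, FutureCausal I L f a b α β ∧
    (α a, β a) = p ∧ (α b, β b) = q ∧ r = LorLen f a b α β})

/-! Pointwise, `0 ≤ g ≤ f` makes the `g`-integrand the larger one, so lengths grow and every
`f`-causal curve is `g`-causal. The suprema defining `τ` then compare once the `g`-lengths from
`p` to `q` are bounded: each is at most `∫ α' = α b − α a = q.1 − p.1`, by the fundamental
theorem of calculus for the Lipschitz, hence absolutely continuous, time component. -/

theorem sqrt_sq_sub_mul_sq_le_abs (x y c : ℝ) : √(x ^ 2 - c ^ 2 * y ^ 2) ≤ |x| := by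
  rw [← Real.sqrt_sq_eq_abs]
  exact Real.sqrt_le_sqrt (sub_le_self _ (by positivity))

namespace Admissible

variable {I : Set ℝ} {L a b : ℝ} {α β : ℝ → ℝ}

theorem absolutelyContinuousOnInterval_fst (h : Admissible I L a b α β) :
    AbsolutelyContinuousOnInterval α a b := by
  obtain ⟨hab, ⟨K, hα⟩, -⟩ := h
  rw [← uIcc_of_le hab.le] at hα
  exact hα.absolutelyContinuousOnInterval

theorem intervalIntegrable_lorLen {F : ℝ → ℝ} (h : Admissible I L a b α β)
    (hF : ContinuousOn F I) :
    IntervalIntegrable (fun t => √(deriv α t ^ 2 - F (α t) ^ 2 * deriv β t ^ 2)) volume a b := by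
  have hderiv := h.absolutelyContinuousOnInterval_fst.intervalIntegrable_deriv
  obtain ⟨hab, ⟨K, hα⟩, -, hαI, -⟩ := h
  rw [intervalIntegrable_iff_integrableOn_Icc_of_le hab.le] at hderiv ⊢
  have hFα := (hF.comp hα.continuousOn hαI).aemeasurable (μ := volume) measurableSet_Icc
  have hα' := (measurable_deriv α).aemeasurable (μ := volume.restrict (Icc a b))
  have hβ' := (measurable_deriv β).aemeasurable (μ := volume.restrict (Icc a b))
  refine hderiv.norm.mono' ?_ (ae_of_all _ fun t => ?_)
  · exact ((hα'.pow_const 2).sub ((hFα.pow_const 2).mul (hβ'.pow_const 2))).sqrt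
      |>.aestronglyMeasurable
  · rw [Real.norm_eq_abs, abs_of_nonneg (Real.sqrt_nonneg _)]
    exact sqrt_sq_sub_mul_sq_le_abs _ _ _

theorem lorLen_le_lorLen {f g : ℝ → ℝ} (h : Admissible I L a b α β) (hf : ContinuousOn f I)
    (hg : ContinuousOn g I) (hgf : ∀ x ∈ I, g x ^ 2 ≤ f x ^ 2) :
    LorLen f a b α β ≤ LorLen g a b α β :=
  intervalIntegral.integral_mono_on h.1.le (h.intervalIntegrable_lorLen hf)
    (h.intervalIntegrable_lorLen hg) fun _ ht =>
      Real.sqrt_le_sqrt <| sub_le_sub_left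
        (mul_le_mul_of_nonneg_right (hgf _ (h.2.2.2.1 ht)) (sq_nonneg _)) _

end Admissible

namespace FutureCausal

variable {I : Set ℝ} {L a b : ℝ} {f g α β : ℝ → ℝ}

theorem mono (h : FutureCausal I L f a b α β) (hgf : ∀ x ∈ I, g x ^ 2 ≤ f x ^ 2) :
    FutureCausal I L g a b α β := by
  refine ⟨h.1, ?_⟩
  filter_upwards [h.2, ae_restrict_mem measurableSet_Icc] with t ⟨hα', hcausal⟩ ht
  exact ⟨hα', (mul_le_mul_of_nonneg_right (hgf _ (h.1.2.2.2.1 ht)) (sq_nonneg _)).trans hcausal⟩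

theorem lorLen_le_sub (h : FutureCausal I L f a b α β) (hf : ContinuousOn f I) :
    LorLen f a b α β ≤ α b - α a := by
  have hac := h.1.absolutelyContinuousOnInterval_fst
  rw [← hac.integral_deriv_eq_sub]
  refine intervalIntegral.integral_mono_ae_restrict h.1.1.le (h.1.intervalIntegrable_lorLen hf)
    hac.intervalIntegrable_deriv ?_
  filter_upwards [h.2] with t ht
  exact (sqrt_sq_sub_mul_sq_le_abs _ _ _).trans_eq (abs_of_nonneg ht.1)

end FutureCausal

section TimeSeparation

variable {I : Set ℝ} {L : ℝ} {f g : ℝ → ℝ}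

theorem bddAbove_causalLengths (hf : ContinuousOn f I) (p q : ℝ × ℝ) :
    BddAbove (insert 0 {r | ∃ a b α β, FutureCausal I L f a b α β ∧
      (α a, β a) = p ∧ (α b, β b) = q ∧ r = LorLen f a b α β}) := by
  refine ⟨max 0 (q.1 - p.1), ?_⟩
  rintro r (rfl | ⟨a, b, α, β, hγ, rfl, rfl, rfl⟩)
  · exact le_max_left _ _
  · exact (hγ.lorLen_le_sub hf).trans (le_max_right _ _)

theorem tauW_le_tauW (hg : ContinuousOn g I)
    (hcausal : ∀ a b α β, FutureCausal I L f a b α β → FutureCausal I L g a b α β)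
    (hlen : ∀ a b α β, FutureCausal I L f a b α β → LorLen f a b α β ≤ LorLen g a b α β)
    (p q : ℝ × ℝ) : tauW I L f p q ≤ tauW I L g p q := by
  have hbdd := bddAbove_causalLengths (L := L) hg p q
  refine csSup_le (insert_nonempty _ _) ?_
  rintro r (rfl | ⟨a, b, α, β, hγ, hp, hq, rfl⟩)
  · exact le_csSup hbdd (mem_insert _ _)
  · exact (hlen a b α β hγ).trans <|
      le_csSup hbdd (mem_insert_of_mem _ ⟨a, b, α, β, hcausal a b α β hγ, hp, hq, rfl⟩)

end TimeSeparation

theorem stmt_1_general (I : Set ℝ) (L : ℝ) (f g : ℝ → ℝ)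
    (hf : ContinuousOn f I) (hg : ContinuousOn g I)
    (hg0 : ∀ x ∈ I, 0 ≤ g x)
    (hgf : ∀ x ∈ I, g x ≤ f x) :
    (∀ a b α β, FutureCausal I L f a b α β → LorLen f a b α β ≤ LorLen g a b α β) ∧
    (∀ p q : ℝ × ℝ,
      (∃ a b α β, FutureCausal I L f a b α β ∧ (α a, β a) = p ∧ (α b, β b) = q) →
      tauW I L f p q ≤ tauW I L g p q) := by
  have hsq : ∀ x ∈ I, g x ^ 2 ≤ f x ^ 2 := fun x hx =>
    pow_le_pow_left₀ (hg0 x hx) (hgf x hx) 2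
  have hlen : ∀ a b α β, FutureCausal I L f a b α β → LorLen f a b α β ≤ LorLen g a b α β :=
    fun _ _ _ _ hγ => hγ.1.lorLen_le_lorLen hf hg hsq
  exact ⟨hlen, fun p q _ => tauW_le_tauW hg (fun _ _ _ _ hγ => hγ.mono hsq) hlen p q⟩

/-- If `0 ≤ g ≤ f` on `I`, then the Lorentzian length of any `f`-causal curve w.r.t. `f`
is at most its length w.r.t. `g`, and the time separation functions satisfy
`τ_{−I×_f[0,L]} ≤ τ_{−I×_g[0,L]}` on causally related pairs. -/
theorem stmt_1 (I : Set ℝ) (L : ℝ) (hL : 0 < L) (f g : ℝ → ℝ)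
    (hf : ContinuousOn f I) (hg : ContinuousOn g I)
    (hf0 : ∀ x ∈ I, 0 ≤ f x) (hg0 : ∀ x ∈ I, 0 ≤ g x)
    (hgf : ∀ x ∈ I, g x ≤ f x) :
    (∀ a b α β, FutureCausal I L f a b α β → LorLen f a b α β ≤ LorLen g a b α β) ∧
    (∀ p q : ℝ × ℝ,
      (∃ a b α β, FutureCausal I L f a b α β ∧ (α a, β a) = p ∧ (α b, β b) = q) →
      tauW I L f p q ≤ tauW I L g p q) :=
  stmt_1_general I L f g hf hg hg0 hgf
end

section
/- Let γ = (α, β) be an admissible curve with Lipschitz components defined on [a,b], with values in I × [0,L], such that (α')² − (f∘α)²(β')² ≥ 1/(4l²) a.e. for a continuous f : I → (0,∞) and l > 0. Then for all sufficiently small η > 0 one has (α')² − ((f∘α)+η)²(β')² > 0 a.e., and moreover √((α')² − (f+η)²∘α·(β')²) ≥ √((α')² − f²∘α·(β')²) − C·√η·|β'| a.e. for a constant C depending only on sup f. -/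
/-!
Write `X = α'² − f(α)²β'²` and `D = (2 f(α) η + η²) β'²`, so that the perturbed quantity is
`X − D`. With `M = max f` and `η ≤ M` one has `D ≤ 3Mη β'²`, and `β'` is bounded by the Lipschitz
constant of `β`; hence for small `η` the defect `D` stays below the lower bound `1/(4l²)` of `X`,
which gives positivity, while subadditivity of the square root gives
`√X ≤ √(X − D) + √D ≤ √(X − D) + √(3M) √η |β'|`.
-/

open MeasureTheory Set

lemma Real.sqrt_add_le_add_sqrt {x y : ℝ} (hx : 0 ≤ x) (hy : 0 ≤ y) :
    √(x + y) ≤ √x + √y := by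
  rw [Real.sqrt_le_iff]
  refine ⟨by positivity, ?_⟩
  nlinarith [Real.sq_sqrt hx, Real.sq_sqrt hy, Real.sqrt_nonneg x, Real.sqrt_nonneg y]

lemma ae_restrict_Icc_abs_deriv_le {g : ℝ → ℝ} {K : NNReal} {a b : ℝ}
    (hg : LipschitzOnWith K g (Icc a b)) :
    ∀ᵐ t ∂(volume.restrict (Icc a b)), |deriv g t| ≤ K := by
  rw [← Measure.restrict_congr_set Ioo_ae_eq_Icc]
  filter_upwards [ae_restrict_mem measurableSet_Ioo] with t ht
  exact norm_deriv_le_of_lipschitzOn (Icc_mem_nhds ht.1 ht.2) hg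

lemma sub_perturbed_pos_and_sqrt_le {A B F M η : ℝ} (hF : 0 ≤ F) (hFM : F ≤ M)
    (hη : 0 ≤ η) (hηM : η ≤ M) (hsmall : 3 * M * η * B ^ 2 < A ^ 2 - F ^ 2 * B ^ 2) :
    0 < A ^ 2 - (F + η) ^ 2 * B ^ 2 ∧
      √(A ^ 2 - F ^ 2 * B ^ 2) - √(3 * M) * √η * |B| ≤ √(A ^ 2 - (F + η) ^ 2 * B ^ 2) := by
  set D := (2 * F * η + η ^ 2) * B ^ 2
  have hsplit : A ^ 2 - F ^ 2 * B ^ 2 = (A ^ 2 - (F + η) ^ 2 * B ^ 2) + D := by ring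
  have hD : 0 ≤ D := by positivity
  have hDle : D ≤ 3 * M * η * B ^ 2 := by
    have : 2 * F * η + η ^ 2 ≤ 3 * M * η := by nlinarith
    exact mul_le_mul_of_nonneg_right this (sq_nonneg B)
  have hpos : 0 < A ^ 2 - (F + η) ^ 2 * B ^ 2 := by linarith
  refine ⟨hpos, ?_⟩
  have hsqrtD : √D ≤ √(3 * M) * √η * |B| := calc
    √D ≤ √(3 * M * η * B ^ 2) := Real.sqrt_le_sqrt hDle
    _ = √(3 * M) * √η * |B| := by
      have hM : 0 ≤ M := hF.trans hFM
      rw [Real.sqrt_mul (by positivity), Real.sqrt_mul (by positivity), Real.sqrt_sq_eq_abs]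
  have := Real.sqrt_add_le_add_sqrt hpos.le hD
  rw [hsplit]
  linarith

theorem stmt_2_general (I : Set ℝ) (hI : IsCompact I) (hIne : I.Nonempty)
    (f : ℝ → ℝ) (hf : ContinuousOn f I) (hfpos : ∀ x ∈ I, 0 < f x)
    (a b : ℝ) (l : ℝ) (hl : 0 < l)
    (α β : ℝ → ℝ) (Kβ : NNReal)
    (hβ : LipschitzOnWith Kβ β (Icc a b))
    (hαI : MapsTo α (Icc a b) I)
    (hcausal : ∀ᵐ t ∂(volume.restrict (Icc a b)),
      1 / (4 * l ^ 2) ≤ (deriv α t) ^ 2 - (f (α t)) ^ 2 * (deriv β t) ^ 2) :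
    ∃ C > 0, ∃ η₀ > 0, ∀ η : ℝ, 0 < η → η < η₀ →
      ∀ᵐ t ∂(volume.restrict (Icc a b)),
        0 < (deriv α t) ^ 2 - (f (α t) + η) ^ 2 * (deriv β t) ^ 2 ∧
        Real.sqrt ((deriv α t) ^ 2 - (f (α t)) ^ 2 * (deriv β t) ^ 2)
            - C * Real.sqrt η * |deriv β t|
          ≤ Real.sqrt ((deriv α t) ^ 2 - (f (α t) + η) ^ 2 * (deriv β t) ^ 2) := by
  obtain ⟨x₀, hx₀, hmax⟩ := hI.exists_isMaxOn hIne hf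
  set M := f x₀
  have hM : 0 < M := hfpos x₀ hx₀
  set K : ℝ := (Kβ : ℝ)
  refine ⟨√(3 * M), by positivity, min M (1 / (12 * M * l ^ 2 * (K ^ 2 + 1))),
    by positivity, fun η hη hηη₀ => ?_⟩
  have hηM : η ≤ M := (hηη₀.trans_le (min_le_left _ _)).le
  have hηsmall : 3 * M * η * K ^ 2 < 1 / (4 * l ^ 2) := by
    have h := hηη₀.trans_le (min_le_right _ _)
    rw [lt_div_iff₀ (by positivity)] at h ⊢
    nlinarith [mul_pos (mul_pos hM hη) (pow_pos hl 2)]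
  filter_upwards [hcausal, ae_restrict_Icc_abs_deriv_le hβ,
    ae_restrict_mem (measurableSet_Icc (a := a) (b := b))] with t hX hβ't ht
  have hB : deriv β t ^ 2 ≤ K ^ 2 := by
    rw [← sq_abs]; exact pow_le_pow_left₀ (abs_nonneg _) hβ't 2
  refine sub_perturbed_pos_and_sqrt_le (hfpos _ (hαI ht)).le (hmax (hαI ht)) hη.le hηM ?_
  calc 3 * M * η * deriv β t ^ 2 ≤ 3 * M * η * K ^ 2 := by gcongr
    _ < 1 / (4 * l ^ 2) := hηsmall
    _ ≤ _ := hX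

/-- If `γ = (α,β)` is an admissible Lipschitz curve in `I × [0,L]` with
`(α')² − (f∘α)²(β')² ≥ 1/(4l²)` a.e., then there are `C > 0` (depending only on `sup f`)
and `η₀ > 0` such that for all `0 < η < η₀`, a.e. one has
`(α')² − ((f∘α)+η)²(β')² > 0` and
`√((α')² − ((f∘α)+η)²(β')²) ≥ √((α')² − (f∘α)²(β')²) − C √η |β'|`. -/
theorem stmt_2 (I : Set ℝ) (hI : IsCompact I) (hIne : I.Nonempty)
    (f : ℝ → ℝ) (hf : ContinuousOn f I) (hfpos : ∀ x ∈ I, 0 < f x)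
    (a b L : ℝ) (hab : a < b) (hL : 0 < L) (l : ℝ) (hl : 0 < l)
    (α β : ℝ → ℝ) (Kα Kβ : NNReal)
    (hα : LipschitzOnWith Kα α (Icc a b)) (hβ : LipschitzOnWith Kβ β (Icc a b))
    (hαI : MapsTo α (Icc a b) I) (hβL : MapsTo β (Icc a b) (Icc 0 L))
    (hcausal : ∀ᵐ t ∂(volume.restrict (Icc a b)),
      1 / (4 * l ^ 2) ≤ (deriv α t) ^ 2 - (f (α t)) ^ 2 * (deriv β t) ^ 2) :
    ∃ C > 0, ∃ η₀ > 0, ∀ η : ℝ, 0 < η → η < η₀ →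
      ∀ᵐ t ∂(volume.restrict (Icc a b)),
        0 < (deriv α t) ^ 2 - (f (α t) + η) ^ 2 * (deriv β t) ^ 2 ∧
        Real.sqrt ((deriv α t) ^ 2 - (f (α t)) ^ 2 * (deriv β t) ^ 2)
            - C * Real.sqrt η * |deriv β t|
          ≤ Real.sqrt ((deriv α t) ^ 2 - (f (α t) + η) ^ 2 * (deriv β t) ^ 2) :=
  stmt_2_general I hI hIne f hf hfpos a b l hl α β Kβ hβ hαI hcausal
end

section
/- Let f : [a,b] → ℝ be continuous and λ-concave on (a,b) (i.e., f(t) − (λ/2)t² is concave). If f_i : [a_i,b_i] → ℝ are λ-concave continuous functions, [a_i,b_i] → [a,b] (a_i→a, b_i→b), f_i → f uniformly, and x_i → x with x_i ∈ [a_i,b_i], x ∈ [a,b], then liminf_{i→∞} |∂f_i|(x_i) ≥ |∂f|(x), where |∂g|(x) = max{ d⁺g/dt(x), −d⁻g/dt(x), 0 } is the local slope (with the convention d⁻g/dt(a) = +∞ and d⁺g/dt(b) = −∞). -/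
open Filter Set Topology

/-- The local slope `|∂g|(x) = limsup_{y→x, y∈s} (g(y)−g(x))⁺/|y−x|` of a function on a
set `s` (at an interior point this is `max{d⁺g(x), −d⁻g(x), 0}`; the one-sided boundary
conventions of the paper are automatically encoded by taking the limsup within `s`). -/
noncomputable def locSlope (g : ℝ → ℝ) (s : Set ℝ) (x : ℝ) : EReal :=
  Filter.limsup (fun y => ((max (g y - g x) 0 / |y - x| : ℝ) : EReal)) (𝓝[s \ {x}] x)

/-!
For `y` near `x` and `r` strictly between `x` and `y`, the point `r` also lies strictly between
`xᵢ` and `y` for large `i`, so the three-point secant inequalities of the `λ`-concave `fᵢ` give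
`|∂fᵢ|(xᵢ) ≥ (fᵢ y - fᵢ r) / |y - r| - |λ| |y - xᵢ|`. Letting `i → ∞` and then `r → x` bounds
`liminf |∂fᵢ|(xᵢ)` below by `(f y - f x) / |y - x| - |λ| |y - x|`, whose error term vanishes as
`y → x`. Comparing with `r` rather than `xᵢ` avoids any control of `fᵢ xᵢ` when `xᵢ` lies
outside `[a, b]`, where `f` need not be continuous.
-/

theorem concaveOn_closure_of_continuousOn {E : Type*} [AddCommGroup E] [Module ℝ E]
    [TopologicalSpace E] [IsTopologicalAddGroup E] [ContinuousSMul ℝ E] {s : Set E} {f : E → ℝ}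
    (hf : ConcaveOn ℝ s f) (hc : ContinuousOn f (closure s)) : ConcaveOn ℝ (closure s) f := by
  refine ⟨hf.1.closure, fun x hx y hy a b ha hb hab => ?_⟩
  have hxy : (x, y) ∈ closure (s ×ˢ s) := by rw [closure_prod_eq]; exact ⟨hx, hy⟩
  have hcs : ∀ u ∈ closure s, ContinuousWithinAt f s u := fun u hu =>
    (hc u hu).mono subset_closure
  have hmaps : MapsTo (fun p : E × E => a • p.1 + b • p.2) (s ×ˢ s) (closure s) :=
    fun p hp => subset_closure (hf.1 hp.1 hp.2 ha hb hab)
  have hcomb : ContinuousWithinAt (fun p : E × E => a • p.1 + b • p.2) (s ×ˢ s) (x, y) :=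
    (by fun_prop : Continuous fun p : E × E => a • p.1 + b • p.2).continuousWithinAt
  refine ContinuousWithinAt.closure_le (f := fun p : E × E => a • f p.1 + b • f p.2)
    (g := fun p : E × E => f (a • p.1 + b • p.2)) hxy ?_ ?_ fun p hp => hf.2 hp.1 hp.2 ha hb hab
  · exact (((hcs x hx).comp continuousWithinAt_fst fun p hp => hp.1).const_smul a).add
      (((hcs y hy).comp continuousWithinAt_snd fun p hp => hp.2).const_smul b)
  · exact (hc _ (hf.1.closure hx hy ha hb hab)).comp (x := (x, y)) hcomb hmaps

lemma mem_openSegment_iff_mul_pos {p q r : ℝ} (hpq : p ≠ q) :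
    r ∈ openSegment ℝ p q ↔ 0 < (r - p) * (q - r) := by
  rw [openSegment_eq_Ioo' hpq]
  rcases hpq.lt_or_gt with h | h
  · rw [min_eq_left h.le, max_eq_right h.le]
    exact ⟨fun ⟨h1, h2⟩ => by nlinarith, fun h' => ⟨by nlinarith, by nlinarith⟩⟩
  · rw [min_eq_right h.le, max_eq_left h.le]
    exact ⟨fun ⟨h1, h2⟩ => by nlinarith, fun h' => ⟨by nlinarith, by nlinarith⟩⟩

section SemiConcave

variable {s : Set ℝ} {g : ℝ → ℝ} {lam p q z : ℝ}

lemma combo_le_of_concaveOn_sub_sq (hg : ConcaveOn ℝ s (fun t => g t - lam / 2 * t ^ 2))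
    (hp : p ∈ s) (hq : q ∈ s) {α β : ℝ} (hα : 0 ≤ α) (hβ : 0 ≤ β) (hαβ : α + β = 1) :
    α * g p + β * g q - lam / 2 * (α * β * (q - p) ^ 2) ≤ g (α * p + β * q) := by
  have h := hg.2 hp hq hα hβ hαβ
  simp only [smul_eq_mul] at h
  have hsq : (α * p + β * q) ^ 2 = α * p ^ 2 + β * q ^ 2 - α * β * (q - p) ^ 2 := by
    obtain rfl : β = 1 - α := by linarith
    ring
  rw [hsq] at h
  linarith

lemma secant_sub_le_secant_of_mem_openSegment
    (hg : ConcaveOn ℝ s (fun t => g t - lam / 2 * t ^ 2)) (hp : p ∈ s) (hq : q ∈ s)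
    (hpq : p ≠ q) (hz : z ∈ openSegment ℝ p q) :
    (g q - g p) / |q - p| - |lam| / 2 * |q - p| ≤ (g z - g p) / |z - p| := by
  obtain ⟨α, β, hα, hβ, hαβ, rfl⟩ := hz
  simp only [smul_eq_mul]
  have hd : 0 < |q - p| := abs_pos.2 (sub_ne_zero.2 hpq.symm)
  have hzp : |α * p + β * q - p| = β * |q - p| := by
    rw [show α * p + β * q - p = β * (q - p) by linear_combination p * hαβ, abs_mul,
      abs_of_pos hβ]
  have hcombo := combo_le_of_concaveOn_sub_sq hg hp hq hα.le hβ.le hαβ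
  have hlam : lam * α ≤ |lam| :=
    calc lam * α ≤ |lam| * α := mul_le_mul_of_nonneg_right (le_abs_self lam) hα.le
      _ ≤ |lam| := mul_le_of_le_one_right (abs_nonneg lam) (by linarith)
  have hlhs : ((g q - g p) / |q - p| - |lam| / 2 * |q - p|) * (β * |q - p|)
      = β * (g q - g p) - |lam| / 2 * (β * (q - p) ^ 2) := by
    rw [← sq_abs (q - p)]; field_simp
  rw [hzp, le_div_iff₀ (by positivity), hlhs]
  linarith [mul_le_mul_of_nonneg_right hlam (by positivity : 0 ≤ β * (q - p) ^ 2),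
    congrArg (· * g p) hαβ]

lemma secant_le_secant_add_of_mem_openSegment
    (hg : ConcaveOn ℝ s (fun t => g t - lam / 2 * t ^ 2)) (hp : p ∈ s) (hq : q ∈ s)
    (hpq : p ≠ q) (hz : z ∈ openSegment ℝ p q) :
    (g q - g z) / |q - z| ≤ (g q - g p) / |q - p| + |lam| / 2 * |q - p| := by
  obtain ⟨α, β, hα, hβ, hαβ, rfl⟩ := hz
  simp only [smul_eq_mul]
  have hd : 0 < |q - p| := abs_pos.2 (sub_ne_zero.2 hpq.symm)
  have hqz : |q - (α * p + β * q)| = α * |q - p| := by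
    rw [show q - (α * p + β * q) = α * (q - p) by linear_combination (-q) * hαβ, abs_mul,
      abs_of_pos hα]
  have hcombo := combo_le_of_concaveOn_sub_sq hg hp hq hα.le hβ.le hαβ
  have hlam : lam * β ≤ |lam| :=
    calc lam * β ≤ |lam| * β := mul_le_mul_of_nonneg_right (le_abs_self lam) hβ.le
      _ ≤ |lam| := mul_le_of_le_one_right (abs_nonneg lam) (by linarith)
  have hrhs : ((g q - g p) / |q - p| + |lam| / 2 * |q - p|) * (α * |q - p|)
      = α * (g q - g p) + |lam| / 2 * (α * (q - p) ^ 2) := by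
    rw [← sq_abs (q - p)]; field_simp
  rw [hqz, div_le_iff₀ (by positivity), hrhs]
  linarith [mul_le_mul_of_nonneg_right hlam (by positivity : 0 ≤ α * (q - p) ^ 2),
    congrArg (· * g q) hαβ]

lemma secant_sub_le_locSlope (hg : ConcaveOn ℝ s (fun t => g t - lam / 2 * t ^ 2))
    (hp : p ∈ s) (hq : q ∈ s) (hpq : p ≠ q) :
    (((g q - g p) / |q - p| - |lam| / 2 * |q - p| : ℝ) : EReal) ≤ locSlope g s p := by
  have hsub : openSegment ℝ p q ⊆ s \ {p} := fun z hz =>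
    ⟨hg.1.openSegment_subset hp hq hz, fun hzp => hpq (left_mem_openSegment_iff.1 (hzp ▸ hz))⟩
  have : (𝓝[openSegment ℝ p q] p).NeBot := mem_closure_iff_nhdsWithin_neBot.1
    (segment_subset_closure_openSegment (left_mem_segment ℝ p q))
  have hpoint : ∀ z ∈ openSegment ℝ p q,
      (((g q - g p) / |q - p| - |lam| / 2 * |q - p| : ℝ) : EReal)
        ≤ ((max (g z - g p) 0 / |z - p| : ℝ) : EReal) := fun z hz =>
    EReal.coe_le_coe_iff.2 ((secant_sub_le_secant_of_mem_openSegment hg hp hq hpq hz).trans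
      (div_le_div_of_nonneg_right (le_max_left _ _) (abs_nonneg _)))
  calc _ ≤ limsup (fun z => ((max (g z - g p) 0 / |z - p| : ℝ) : EReal)) (𝓝[openSegment ℝ p q] p) :=
        le_limsup_of_frequently_le' (eventually_mem_nhdsWithin.mono hpoint).frequently
    _ ≤ locSlope g s p := limsup_le_limsup_of_le (nhdsWithin_mono p hsub)

lemma secant_sub_le_locSlope_of_mem_openSegment
    (hg : ConcaveOn ℝ s (fun t => g t - lam / 2 * t ^ 2)) (hp : p ∈ s) (hq : q ∈ s)
    (hpq : p ≠ q) (hz : z ∈ openSegment ℝ p q) :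
    (((g q - g z) / |q - z| - |lam| * |q - p| : ℝ) : EReal) ≤ locSlope g s p := by
  refine le_trans (EReal.coe_le_coe_iff.2 ?_) (secant_sub_le_locSlope hg hp hq hpq)
  linarith [secant_le_secant_add_of_mem_openSegment hg hp hq hpq hz]

end SemiConcave

lemma locSlope_nonneg {s : Set ℝ} {x : ℝ} (hs : (𝓝[s \ {x}] x).NeBot) (g : ℝ → ℝ) :
    0 ≤ locSlope g s x :=
  le_limsup_of_frequently_le' (Frequently.of_forall fun _ =>
    EReal.coe_nonneg.2 (div_nonneg (le_max_right _ _) (abs_nonneg _)))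

lemma nhdsWithin_Icc_diff_singleton_neBot {u v x : ℝ} (huv : u < v) (hx : x ∈ Icc u v) :
    (𝓝[Icc u v \ {x}] x).NeBot := by
  rcases hx.2.lt_or_eq with hxv | rfl
  · exact (left_nhdsWithin_Ioo_neBot hxv).mono
      (nhdsWithin_mono _ fun z hz => ⟨⟨hx.1.trans hz.1.le, hz.2.le⟩, hz.1.ne'⟩)
  · exact (right_nhdsWithin_Ioo_neBot huv).mono
      (nhdsWithin_mono _ fun z hz => ⟨⟨hz.1.le, hz.2.le⟩, hz.2.ne⟩)

lemma eventually_mem_Ioo_nhdsWithin_Icc_diff_singleton (a b x : ℝ) :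
    ∀ᶠ y in 𝓝[Icc a b \ {x}] x, y ∈ Ioo a b := by
  have hfar : ∀ᶠ y in 𝓝 x, y ∉ ({a, b} \ {x} : Set ℝ) :=
    ((toFinite _).sdiff.isClosed.isOpen_compl).mem_nhds fun h => h.2 rfl
  filter_upwards [nhdsWithin_le_nhds hfar, self_mem_nhdsWithin] with y hy ⟨⟨hay, hyb⟩, hyx⟩
  exact ⟨hay.lt_of_ne fun h => hy ⟨Or.inl h.symm, hyx⟩,
    hyb.lt_of_ne fun h => hy ⟨Or.inr h, hyx⟩⟩

lemma limsup_coe_le_of_sub_le {α : Type*} {l : Filter α} {u v : α → ℝ} {L : EReal}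
    (hv : Tendsto v l (𝓝 0)) (h : ∀ᶠ y in l, ((u y - v y : ℝ) : EReal) ≤ L) :
    limsup (fun y => (u y : EReal)) l ≤ L := by
  rw [← EReal.le_of_forall_lt_iff_le]
  intro z hz
  obtain ⟨w, hLw, hwz⟩ := EReal.exists_between_coe_real hz
  refine limsup_le_of_le (by isBoundedDefault) ?_
  filter_upwards [h, hv.eventually (gt_mem_nhds (sub_pos.2 (EReal.coe_lt_coe_iff.1 hwz)))]
    with y hy hvy
  have : u y - v y ≤ w := EReal.coe_le_coe_iff.1 (hy.trans hLw.le)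
  exact EReal.coe_le_coe_iff.2 (by linarith)

lemma tendsto_apply_of_uniform {α : Type*} {f : α → ℝ} {fs : ℕ → α → ℝ} {I : ℕ → Set α}
    (hunif : ∀ ε > (0:ℝ), ∃ N, ∀ i ≥ N, ∀ x ∈ I i, |fs i x - f x| ≤ ε) {z : α}
    (hz : ∀ᶠ i in atTop, z ∈ I i) : Tendsto (fun i => fs i z) atTop (𝓝 (f z)) := by
  rw [Metric.tendsto_atTop]
  intro ε hε
  obtain ⟨N, hN⟩ := hunif (ε / 2) (half_pos hε)
  obtain ⟨M, hM⟩ := eventually_atTop.1 hz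
  refine ⟨max N M, fun i hi => ?_⟩
  rw [Real.dist_eq]
  exact (hN i (le_of_max_le_left hi) z (hM i (le_of_max_le_right hi))).trans_lt (half_lt_self hε)

lemma eventually_mem_Icc_of_mem_Ioo {ι : Type*} {l : Filter ι} {as bs : ι → ℝ} {a b z : ℝ}
    (ha : Tendsto as l (𝓝 a)) (hb : Tendsto bs l (𝓝 b)) (hz : z ∈ Ioo a b) :
    ∀ᶠ i in l, z ∈ Icc (as i) (bs i) :=
  ((ha.eventually (gt_mem_nhds hz.1)).and (hb.eventually (lt_mem_nhds hz.2))).mono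
    fun _ h => ⟨h.1.le, h.2.le⟩

section Approximation

variable {lam a b : ℝ} {f : ℝ → ℝ} {as bs : ℕ → ℝ} {fs : ℕ → ℝ → ℝ} {xs : ℕ → ℝ} {x : ℝ}

lemma secant_sub_le_liminf_locSlope_of_mem_openSegment
    (ha : Tendsto as atTop (𝓝 a)) (hb : Tendsto bs atTop (𝓝 b))
    (hfsconc : ∀ i, ConcaveOn ℝ (Icc (as i) (bs i)) (fun t => fs i t - lam / 2 * t ^ 2))
    (hunif : ∀ ε > (0:ℝ), ∃ N, ∀ i ≥ N, ∀ x ∈ Icc (as i) (bs i), |fs i x - f x| ≤ ε)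
    (hxs : ∀ i, xs i ∈ Icc (as i) (bs i)) (hx : x ∈ Icc a b) (hxconv : Tendsto xs atTop (𝓝 x))
    {y r : ℝ} (hy : y ∈ Ioo a b) (hxy : x ≠ y) (hr : r ∈ openSegment ℝ x y) :
    (((f y - f r) / |y - r| - |lam| * |y - x| : ℝ) : EReal)
      ≤ liminf (fun i => locSlope (fs i) (Icc (as i) (bs i)) (xs i)) atTop := by
  have hrI : r ∈ Ioo a b := by
    rw [← interior_Ioo]
    refine (convex_Ioo a b).openSegment_closure_interior_subset_interior ?_ ?_ hr <;>
      simp only [closure_Ioo (hy.1.trans hy.2).ne, interior_Ioo, hx, hy]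
  have hyI := eventually_mem_Icc_of_mem_Ioo ha hb hy
  have hbetween : ∀ᶠ i in atTop, 0 < (r - xs i) * (y - r) :=
    ((hxconv.const_sub r).mul_const (y - r)).eventually
      (lt_mem_nhds ((mem_openSegment_iff_mul_pos hxy).1 hr))
  have hlim : Tendsto (fun i => (fs i y - fs i r) / |y - r| - |lam| * |y - xs i|) atTop
      (𝓝 ((f y - f r) / |y - r| - |lam| * |y - x|)) :=
    (((tendsto_apply_of_uniform hunif hyI).sub (tendsto_apply_of_uniform hunif
      (eventually_mem_Icc_of_mem_Ioo ha hb hrI))).div_const _).sub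
      ((tendsto_const_nhds.sub hxconv).abs.const_mul _)
  calc _ = liminf (fun i => (((fs i y - fs i r) / |y - r| - |lam| * |y - xs i| : ℝ) : EReal))
        atTop := ((continuous_coe_real_ereal.tendsto _).comp hlim).liminf_eq.symm
    _ ≤ _ := by
      refine liminf_le_liminf ?_
      filter_upwards [hyI, hbetween] with i hyi hi
      have hne : xs i ≠ y := by
        intro h
        rw [h] at hi
        nlinarith [sq_nonneg (r - y)]
      exact secant_sub_le_locSlope_of_mem_openSegment (hfsconc i) (hxs i) hyi hne
        ((mem_openSegment_iff_mul_pos hne).2 hi)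

lemma secant_sub_le_liminf_locSlope (hfc : ContinuousOn f (Icc a b))
    (ha : Tendsto as atTop (𝓝 a)) (hb : Tendsto bs atTop (𝓝 b))
    (hfsconc : ∀ i, ConcaveOn ℝ (Icc (as i) (bs i)) (fun t => fs i t - lam / 2 * t ^ 2))
    (hunif : ∀ ε > (0:ℝ), ∃ N, ∀ i ≥ N, ∀ x ∈ Icc (as i) (bs i), |fs i x - f x| ≤ ε)
    (hxs : ∀ i, xs i ∈ Icc (as i) (bs i)) (hx : x ∈ Icc a b) (hxconv : Tendsto xs atTop (𝓝 x))
    {y : ℝ} (hy : y ∈ Ioo a b) (hxy : x ≠ y) :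
    (((f y - f x) / |y - x| - |lam| * |y - x| : ℝ) : EReal)
      ≤ liminf (fun i => locSlope (fs i) (Icc (as i) (bs i)) (xs i)) atTop := by
  have : (𝓝[openSegment ℝ x y] x).NeBot := mem_closure_iff_nhdsWithin_neBot.1
    (segment_subset_closure_openSegment (left_mem_segment ℝ x y))
  have hfx : Tendsto f (𝓝[openSegment ℝ x y] x) (𝓝 (f x)) :=
    (hfc x hx).mono ((convex_Icc a b).openSegment_subset hx (Ioo_subset_Icc_self hy))
  have hlim : Tendsto (fun r => (f y - f r) / |y - r| - |lam| * |y - x|)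
      (𝓝[openSegment ℝ x y] x) (𝓝 ((f y - f x) / |y - x| - |lam| * |y - x|)) :=
    ((tendsto_const_nhds.sub hfx).div (tendsto_const_nhds.sub
      (tendsto_nhdsWithin_of_tendsto_nhds tendsto_id)).abs
      (abs_ne_zero.2 (sub_ne_zero.2 hxy.symm))).sub_const _
  exact le_of_tendsto ((continuous_coe_real_ereal.tendsto _).comp hlim)
    (eventually_mem_nhdsWithin.mono fun r hr =>
      secant_sub_le_liminf_locSlope_of_mem_openSegment ha hb hfsconc hunif hxs hx hxconv hy hxy hr)

end Approximation

theorem stmt_6_general (lam a b : ℝ) (f : ℝ → ℝ)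
    (hfc : ContinuousOn f (Icc a b))
    (as bs : ℕ → ℝ) (habs : ∀ i, as i < bs i)
    (ha : Tendsto as atTop (𝓝 a)) (hb : Tendsto bs atTop (𝓝 b))
    (fs : ℕ → ℝ → ℝ) (hfsc : ∀ i, ContinuousOn (fs i) (Icc (as i) (bs i)))
    (hfsconc : ∀ i, ConcaveOn ℝ (Ioo (as i) (bs i)) (fun t => fs i t - lam / 2 * t ^ 2))
    (hunif : ∀ ε > (0:ℝ), ∃ N, ∀ i ≥ N, ∀ x ∈ Icc (as i) (bs i), |fs i x - f x| ≤ ε)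
    (xs : ℕ → ℝ) (hxs : ∀ i, xs i ∈ Icc (as i) (bs i))
    (x : ℝ) (hx : x ∈ Icc a b) (hxconv : Tendsto xs atTop (𝓝 x)) :
    locSlope f (Icc a b) x
      ≤ liminf (fun i => locSlope (fs i) (Icc (as i) (bs i)) (xs i)) atTop := by
  have hconc : ∀ i, ConcaveOn ℝ (Icc (as i) (bs i)) (fun t => fs i t - lam / 2 * t ^ 2) := by
    intro i
    have hcont : ContinuousOn (fun t => fs i t - lam / 2 * t ^ 2) (Icc (as i) (bs i)) :=
      (hfsc i).sub (by fun_prop)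
    rw [← closure_Ioo (habs i).ne] at hcont ⊢
    exact concaveOn_closure_of_continuousOn (hfsconc i) hcont
  have hL : 0 ≤ liminf (fun i => locSlope (fs i) (Icc (as i) (bs i)) (xs i)) atTop :=
    le_liminf_of_le (by isBoundedDefault) (Eventually.of_forall fun i =>
      locSlope_nonneg (nhdsWithin_Icc_diff_singleton_neBot (habs i) (hxs i)) _)
  have hv : Tendsto (fun y => |lam| * |y - x|) (𝓝[Icc a b \ {x}] x) (𝓝 0) :=
    (Continuous.tendsto' (by fun_prop) x 0 (by simp)).mono_left nhdsWithin_le_nhds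
  refine limsup_coe_le_of_sub_le hv ?_
  filter_upwards [eventually_mem_Ioo_nhdsWithin_Icc_diff_singleton a b x, self_mem_nhdsWithin]
    with y hy ⟨_, hyx⟩
  rcases le_total (f y - f x) 0 with hle | hge
  · rw [max_eq_right hle, zero_div, zero_sub]
    exact le_trans (EReal.coe_nonpos.2 (neg_nonpos.2 (by positivity))) hL
  · rw [max_eq_left hge]
    exact secant_sub_le_liminf_locSlope hfc ha hb hconc hunif hxs hx hxconv hy (Ne.symm hyx)

/-- Lower semicontinuity of the local slope along uniformly converging `λ`-concave
functions on converging intervals: `liminf |∂fᵢ|(xᵢ) ≥ |∂f|(x)` whenever `xᵢ → x`. -/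
theorem stmt_6 (lam a b : ℝ) (hab : a < b) (f : ℝ → ℝ)
    (hfc : ContinuousOn f (Icc a b))
    (hfconc : ConcaveOn ℝ (Ioo a b) (fun t => f t - lam / 2 * t ^ 2))
    (as bs : ℕ → ℝ) (habs : ∀ i, as i < bs i)
    (ha : Tendsto as atTop (𝓝 a)) (hb : Tendsto bs atTop (𝓝 b))
    (fs : ℕ → ℝ → ℝ) (hfsc : ∀ i, ContinuousOn (fs i) (Icc (as i) (bs i)))
    (hfsconc : ∀ i, ConcaveOn ℝ (Ioo (as i) (bs i)) (fun t => fs i t - lam / 2 * t ^ 2))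
    (hunif : ∀ ε > (0:ℝ), ∃ N, ∀ i ≥ N, ∀ x ∈ Icc (as i) (bs i), |fs i x - f x| ≤ ε)
    (xs : ℕ → ℝ) (hxs : ∀ i, xs i ∈ Icc (as i) (bs i))
    (x : ℝ) (hx : x ∈ Icc a b) (hxconv : Tendsto xs atTop (𝓝 x)) :
    locSlope f (Icc a b) x
      ≤ liminf (fun i => locSlope (fs i) (Icc (as i) (bs i)) (xs i)) atTop :=
  stmt_6_general lam a b f hfc as bs habs ha hb fs hfsc hfsconc hunif xs hxs x hx hxconv
end

section
/- Let f : [a,b] → (0,∞) be C² with f'' + K f ≤ 0 on (a,b) for some K ∈ ℝ, with K such that b − a < π/√K when K > 0. Then u = log f satisfies the Riccati inequality u'' + (u')² + K ≤ 0, and consequently |u'(t)| = |(log f)'(t)| ≤ max{ cot_K(t − a), cot_K(b − t) } for t ∈ (a,b), where cot_K denotes the generalized cotangent sn_K'/sn_K with sn_K the solution of v'' + K v = 0, v(0)=0, v'(0)=1. -/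
/-!
For `u = log f` one has `u' = f'/f` and `u'' + u'² = f''/f`, so the Riccati inequality is
`f'' + K f ≤ 0` divided by `f`.

For the gradient bound, compare `f` with `sn_K(· - a)`, which is positive on `(a, b)` because
`b - a < π/√K`. The Wronskian `W = f' sn_K(· - a) - f sn_K'(· - a)` has
`W' = (f'' + K f) sn_K(· - a) ≤ 0`. If `W(t) > 0`, then `W > 0` on `(a, t]`, so
`f / sn_K(· - a)` increases there and `f(s) ≤ C sn_K(s - a) → 0` as `s → a⁺`, contradicting
`f(a) > 0`. Hence `u'(t) ≤ cot_K(t - a)`, and the reflection `s ↦ -s` gives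
`-u'(t) ≤ cot_K(b - t)`.
-/

open Set

/-- `sn_K`: the solution of `v'' + Kv = 0`, `v(0) = 0`, `v'(0) = 1`. -/
noncomputable def snK (K t : ℝ) : ℝ :=
  if 0 < K then Real.sin (Real.sqrt K * t) / Real.sqrt K
  else if K = 0 then t
  else Real.sinh (Real.sqrt (-K) * t) / Real.sqrt (-K)

/-- The derivative `sn_K'`. -/
noncomputable def csK (K t : ℝ) : ℝ :=
  if 0 < K then Real.cos (Real.sqrt K * t)
  else if K = 0 then 1
  else Real.cosh (Real.sqrt (-K) * t)

/-- The generalized cotangent `cot_K = sn_K'/sn_K`. -/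
noncomputable def cotK (K t : ℝ) : ℝ := csK K t / snK K t

open Filter Topology

section

variable (K : ℝ)

lemma snK_zero : snK K 0 = 0 := by
  unfold snK; split_ifs <;> simp

lemma hasDerivAt_snK (t : ℝ) : HasDerivAt (snK K) (csK K t) t := by
  show HasDerivAt (fun s => snK K s) _ t
  rcases lt_trichotomy 0 K with hK | rfl | hK
  · have hs : Real.sqrt K ≠ 0 := (Real.sqrt_pos.mpr hK).ne'
    simp only [snK, csK, if_pos hK]
    refine (((hasDerivAt_id' t).const_mul _).sin.div_const _).congr_deriv ?_
    field_simp
  · simpa [snK, csK] using hasDerivAt_id' t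
  · have hs : Real.sqrt (-K) ≠ 0 := (Real.sqrt_pos.mpr (neg_pos.mpr hK)).ne'
    simp only [snK, csK, if_neg hK.not_gt, if_neg hK.ne]
    refine (((hasDerivAt_id' t).const_mul _).sinh.div_const _).congr_deriv ?_
    field_simp

lemma hasDerivAt_csK (t : ℝ) : HasDerivAt (csK K) (-(K * snK K t)) t := by
  show HasDerivAt (fun s => csK K s) _ t
  rcases lt_trichotomy 0 K with hK | rfl | hK
  · have hs : Real.sqrt K ≠ 0 := (Real.sqrt_pos.mpr hK).ne'
    have hsq : Real.sqrt K * Real.sqrt K = K := Real.mul_self_sqrt hK.le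
    simp only [snK, csK, if_pos hK]
    refine (((hasDerivAt_id' t).const_mul _).cos).congr_deriv ?_
    field_simp
    linear_combination -Real.sin (Real.sqrt K * t) * hsq
  · simpa [snK, csK] using hasDerivAt_const t (1 : ℝ)
  · have hs : Real.sqrt (-K) ≠ 0 := (Real.sqrt_pos.mpr (neg_pos.mpr hK)).ne'
    have hsq : Real.sqrt (-K) * Real.sqrt (-K) = -K := Real.mul_self_sqrt (neg_nonneg.mpr hK.le)
    simp only [snK, csK, if_neg hK.not_gt, if_neg hK.ne]
    refine (((hasDerivAt_id' t).const_mul _).cosh).congr_deriv ?_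
    field_simp
    linear_combination Real.sinh (Real.sqrt (-K) * t) * hsq

lemma continuous_snK : Continuous (snK K) :=
  continuous_iff_continuousAt.2 fun t => (hasDerivAt_snK K t).continuousAt

variable {K}

lemma snK_pos {s : ℝ} (hs : 0 < s) (hK : 0 < K → s < Real.pi / Real.sqrt K) :
    0 < snK K s := by
  rcases lt_trichotomy 0 K with hK' | rfl | hK'
  · have hsq : 0 < Real.sqrt K := Real.sqrt_pos.mpr hK'
    simp only [snK, if_pos hK']
    refine div_pos (Real.sin_pos_of_pos_of_lt_pi (by positivity) ?_) hsq
    rw [← lt_div_iff₀' hsq]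
    exact hK hK'
  · simpa [snK] using hs
  · have hsq : 0 < Real.sqrt (-K) := Real.sqrt_pos.mpr (neg_pos.mpr hK')
    simp only [snK, if_neg hK'.not_gt, if_neg hK'.ne]
    exact div_pos (Real.sinh_pos_iff.mpr (by positivity)) hsq

end

section

variable {K a b t : ℝ} {f f' f'' : ℝ → ℝ}

lemma antitoneOn_wronskian_snK (hsn : ∀ s ∈ Ioo a t, 0 ≤ snK K (s - a))
    (hf : ∀ s ∈ Ioc a t, HasDerivAt f (f' s) s)
    (hf' : ∀ s ∈ Ioc a t, HasDerivAt f' (f'' s) s)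
    (hFK : ∀ s ∈ Ioo a t, f'' s + K * f s ≤ 0) :
    AntitoneOn (fun s => f' s * snK K (s - a) - f s * csK K (s - a)) (Ioc a t) := by
  have hW : ∀ s ∈ Ioc a t, HasDerivAt (fun s => f' s * snK K (s - a) - f s * csK K (s - a))
      ((f'' s + K * f s) * snK K (s - a)) s := fun s hs =>
    (((hf' s hs).mul ((hasDerivAt_snK K _).comp_sub_const s a)).sub
      ((hf s hs).mul ((hasDerivAt_csK K _).comp_sub_const s a))).congr_deriv (by ring)
  refine antitoneOn_of_hasDerivWithinAt_nonpos (convex_Ioc a t)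
    (f' := fun s => (f'' s + K * f s) * snK K (s - a))
    (fun s hs => (hW s hs).continuousAt.continuousWithinAt) (fun s hs => ?_) (fun s hs => ?_)
  all_goals rw [interior_Ioc] at hs
  · exact (hW s (Ioo_subset_Ioc_self hs)).hasDerivWithinAt
  · exact mul_nonpos_of_nonpos_of_nonneg (hFK s hs) (hsn s hs)

lemma monotoneOn_div_snK (hsn : ∀ s ∈ Ioc a t, 0 < snK K (s - a))
    (hf : ∀ s ∈ Ioc a t, HasDerivAt f (f' s) s)
    (hW : ∀ s ∈ Ioo a t, 0 ≤ f' s * snK K (s - a) - f s * csK K (s - a)) :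
    MonotoneOn (fun s => f s / snK K (s - a)) (Ioc a t) := by
  have hq : ∀ s ∈ Ioc a t, HasDerivAt (fun s => f s / snK K (s - a))
      ((f' s * snK K (s - a) - f s * csK K (s - a)) / snK K (s - a) ^ 2) s := fun s hs =>
    (hf s hs).div ((hasDerivAt_snK K _).comp_sub_const s a) (hsn s hs).ne'
  refine monotoneOn_of_hasDerivWithinAt_nonneg (convex_Ioc a t)
    (f' := fun s => (f' s * snK K (s - a) - f s * csK K (s - a)) / snK K (s - a) ^ 2)
    (fun s hs => (hq s hs).continuousAt.continuousWithinAt) (fun s hs => ?_) (fun s hs => ?_)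
  all_goals rw [interior_Ioc] at hs
  · exact (hq s (Ioo_subset_Ioc_self hs)).hasDerivWithinAt
  · exact div_nonneg (hW s hs) (sq_nonneg _)

theorem mul_snK_sub_le_mul_csK_sub (hat : a < t)
    (hK : 0 < K → t - a < Real.pi / Real.sqrt K) (hf : ∀ s ∈ Ioc a t, HasDerivAt f (f' s) s)
    (hf' : ∀ s ∈ Ioc a t, HasDerivAt f' (f'' s) s)
    (hFK : ∀ s ∈ Ioo a t, f'' s + K * f s ≤ 0) (hfa : ContinuousWithinAt f (Ioi a) a)
    (hpos : 0 < f a) :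
    f' t * snK K (t - a) ≤ f t * csK K (t - a) := by
  have hsn : ∀ s ∈ Ioc a t, 0 < snK K (s - a) := fun s hs =>
    snK_pos (sub_pos.2 hs.1) fun hK' => (sub_le_sub_right hs.2 a).trans_lt (hK hK')
  by_contra! hWt
  have hW : ∀ s ∈ Ioo a t, 0 ≤ f' s * snK K (s - a) - f s * csK K (s - a) := fun s hs =>
    (sub_pos.2 hWt).le.trans <|
      antitoneOn_wronskian_snK (fun s hs => (hsn s (Ioo_subset_Ioc_self hs)).le) hf hf' hFK
        (Ioo_subset_Ioc_self hs) (right_mem_Ioc.2 hat) hs.2.le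
  set c := f t / snK K (t - a)
  have hbound : ∀ s ∈ Ioc a t, f s ≤ c * snK K (s - a) := fun s hs => by
    have : f s / snK K (s - a) ≤ c := monotoneOn_div_snK hsn hf hW hs (right_mem_Ioc.2 hat) hs.2
    rwa [div_le_iff₀ (hsn s hs)] at this
  have hlim : Tendsto (fun s => c * snK K (s - a)) (𝓝[>] a) (𝓝 0) := by
    have := ((continuous_snK K).comp (continuous_sub_right a)).tendsto a
    simpa [snK_zero] using (this.const_mul c).mono_left nhdsWithin_le_nhds
  have : f a ≤ 0 :=
    le_of_tendsto_of_tendsto hfa hlim (eventually_of_mem (Ioc_mem_nhdsGT hat) hbound)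
  linarith

theorem neg_mul_snK_sub_le_mul_csK_sub (htb : t < b)
    (hK : 0 < K → b - t < Real.pi / Real.sqrt K) (hf : ∀ s ∈ Ico t b, HasDerivAt f (f' s) s)
    (hf' : ∀ s ∈ Ico t b, HasDerivAt f' (f'' s) s)
    (hFK : ∀ s ∈ Ioo t b, f'' s + K * f s ≤ 0) (hfb : ContinuousWithinAt f (Iio b) b)
    (hpos : 0 < f b) :
    -f' t * snK K (b - t) ≤ f t * csK K (b - t) := by
  have hneg : ∀ s ∈ Ioc (-b) (-t), -s ∈ Ico t b := fun s hs =>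
    ⟨le_neg.1 hs.2, neg_lt.1 hs.1⟩
  have hg : ∀ s ∈ Ioc (-b) (-t), HasDerivAt (fun s => f (-s)) (-f' (-s)) s := fun s hs => by
    simpa [Function.comp_def] using (hf _ (hneg s hs)).comp s (hasDerivAt_neg s)
  have hg' : ∀ s ∈ Ioc (-b) (-t), HasDerivAt (fun s => -f' (-s)) (f'' (-s)) s := fun s hs => by
    simpa [Function.comp_def, Pi.neg_def] using ((hf' _ (hneg s hs)).comp s (hasDerivAt_neg s)).neg
  have hgFK : ∀ s ∈ Ioo (-b) (-t), f'' (-s) + K * f (-s) ≤ 0 := fun s hs =>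
    hFK (-s) ⟨lt_neg.1 hs.2, neg_lt.1 hs.1⟩
  have hgb : ContinuousWithinAt (fun s => f (-s)) (Ioi (-b)) (-b) :=
    hfb.comp_of_eq continuous_neg.continuousWithinAt (fun _ hs => mem_Iio.2 (neg_lt.1 hs))
      (neg_neg b)
  have hK' : 0 < K → -t - -b < Real.pi / Real.sqrt K := by rwa [sub_neg_eq_add, neg_add_eq_sub]
  have := mul_snK_sub_le_mul_csK_sub (neg_lt_neg htb) hK' hg hg' hgFK hgb (by rwa [neg_neg])
  rwa [sub_neg_eq_add, neg_add_eq_sub, neg_neg] at this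

lemma abs_div_le_max_cotK (hat : a < t) (htb : t < b)
    (hK : 0 < K → b - a < Real.pi / Real.sqrt K) (hf : ∀ s ∈ Ioo a b, HasDerivAt f (f' s) s)
    (hf' : ∀ s ∈ Ioo a b, HasDerivAt f' (f'' s) s)
    (hFK : ∀ s ∈ Ioo a b, f'' s + K * f s ≤ 0) (hfa : ContinuousWithinAt f (Ioi a) a)
    (hfb : ContinuousWithinAt f (Iio b) b) (hpa : 0 < f a) (hpb : 0 < f b) (hpt : 0 < f t) :
    |f' t / f t| ≤ max (cotK K (t - a)) (cotK K (b - t)) := by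
  have hKl : 0 < K → t - a < Real.pi / Real.sqrt K := fun h => (hK h).trans_le' (by linarith)
  have hKr : 0 < K → b - t < Real.pi / Real.sqrt K := fun h => (hK h).trans_le' (by linarith)
  have hleft : Ioc a t ⊆ Ioo a b := fun s hs => ⟨hs.1, hs.2.trans_lt htb⟩
  have hright : Ico t b ⊆ Ioo a b := fun s hs => ⟨hat.trans_le hs.1, hs.2⟩
  have upper : f' t / f t ≤ cotK K (t - a) := by
    rw [cotK, div_le_div_iff₀ hpt (snK_pos (sub_pos.2 hat) hKl)]
    linarith [mul_snK_sub_le_mul_csK_sub hat hKl (fun s hs => hf s (hleft hs))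
      (fun s hs => hf' s (hleft hs)) (fun s hs => hFK s (hleft (Ioo_subset_Ioc_self hs))) hfa hpa]
  have lower : -cotK K (b - t) ≤ f' t / f t := by
    rw [cotK, ← neg_div, div_le_div_iff₀ (snK_pos (sub_pos.2 htb) hKr) hpt]
    linarith [neg_mul_snK_sub_le_mul_csK_sub htb hKr (fun s hs => hf s (hright hs))
      (fun s hs => hf' s (hright hs)) (fun s hs => hFK s (hright (Ioo_subset_Ico_self hs))) hfb hpb]
  exact abs_le.2 ⟨(neg_le_neg (le_max_right _ _)).trans lower, upper.trans (le_max_left _ _)⟩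

lemma deriv_deriv_log_add_sq {U : Set ℝ} (hU : IsOpen U) (hf : ∀ s ∈ U, HasDerivAt f (f' s) s)
    (hpos : ∀ s ∈ U, 0 < f s) (ht : t ∈ U) (hf' : HasDerivAt f' (f'' t) t) :
    deriv (deriv fun s => Real.log (f s)) t + deriv (fun s => Real.log (f s)) t ^ 2
      = f'' t / f t := by
  have hlog : deriv (fun s => Real.log (f s)) =ᶠ[𝓝 t] fun s => f' s / f s :=
    eventually_of_mem (hU.mem_nhds ht) fun s hs => ((hf s hs).log (hpos s hs).ne').deriv
  have hq : HasDerivAt (fun s => f' s / f s) ((f'' t * f t - f' t * f' t) / f t ^ 2) t :=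
    hf'.div (hf t ht) (hpos t ht).ne'
  rw [hlog.deriv_eq, hq.deriv, hlog.eq_of_nhds]
  field_simp [(hpos t ht).ne']
  ring

end

theorem stmt_8_general (K a b : ℝ)
    (hK : 0 < K → b - a < Real.pi / Real.sqrt K)
    (f : ℝ → ℝ) (hf : ContDiffOn ℝ 2 f (Ioo a b))
    (hfc : ContinuousOn f (Icc a b)) (hfpos : ∀ t ∈ Icc a b, 0 < f t)
    (hFK : ∀ t ∈ Ioo a b, deriv (deriv f) t + K * f t ≤ 0) :
    ∀ t ∈ Ioo a b,
      (deriv (deriv (fun s => Real.log (f s))) t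
          + (deriv (fun s => Real.log (f s)) t) ^ 2 + K ≤ 0) ∧
      |deriv (fun s => Real.log (f s)) t| ≤ max (cotK K (t - a)) (cotK K (b - t)) := by
  have hf1 : ∀ s ∈ Ioo a b, HasDerivAt f (deriv f s) s := fun s hs =>
    ((hf.differentiableOn (by norm_num) s hs).differentiableAt
      (isOpen_Ioo.mem_nhds hs)).hasDerivAt
  have hf2 : ∀ s ∈ Ioo a b, HasDerivAt (deriv f) (deriv (deriv f) s) s := fun s hs =>
    (((hf.deriv_of_isOpen isOpen_Ioo (m := 1) (by norm_num)).differentiableOn one_ne_zero s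
      hs).differentiableAt (isOpen_Ioo.mem_nhds hs)).hasDerivAt
  have hpos : ∀ s ∈ Ioo a b, 0 < f s := fun s hs => hfpos s (Ioo_subset_Icc_self hs)
  intro t ht
  have hab : a < b := ht.1.trans ht.2
  refine ⟨?_, ?_⟩
  · rw [deriv_deriv_log_add_sq isOpen_Ioo hf1 hpos ht (hf2 t ht), div_add' _ _ _ (hpos t ht).ne']
    exact div_nonpos_of_nonpos_of_nonneg (hFK t ht) (hpos t ht).le
  · have hfa : ContinuousWithinAt f (Ioi a) a :=
      ((continuousWithinAt_Icc_iff_Ici hab).1 (hfc a (left_mem_Icc.2 hab.le))).mono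
        Ioi_subset_Ici_self
    have hfb : ContinuousWithinAt f (Iio b) b :=
      ((continuousWithinAt_Icc_iff_Iic hab).1 (hfc b (right_mem_Icc.2 hab.le))).mono
        Iio_subset_Iic_self
    rw [((hf1 t ht).log (hpos t ht).ne').deriv]
    exact abs_div_le_max_cotK ht.1 ht.2 hK hf1 hf2 hFK hfa hfb (hfpos a (left_mem_Icc.2 hab.le))
      (hfpos b (right_mem_Icc.2 hab.le)) (hpos t ht)

/-- If `f : [a,b] → (0,∞)` is `C²` with `f'' + Kf ≤ 0` on `(a,b)` (and `b − a < π/√K`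
when `K > 0`), then `u = log f` satisfies the Riccati inequality `u'' + (u')² + K ≤ 0`,
and `|u'(t)| ≤ max{cot_K(t−a), cot_K(b−t)}` on `(a,b)`. -/
theorem stmt_8 (K a b : ℝ) (hab : a < b)
    (hK : 0 < K → b - a < Real.pi / Real.sqrt K)
    (f : ℝ → ℝ) (hf : ContDiffOn ℝ 2 f (Ioo a b))
    (hfc : ContinuousOn f (Icc a b)) (hfpos : ∀ t ∈ Icc a b, 0 < f t)
    (hFK : ∀ t ∈ Ioo a b, deriv (deriv f) t + K * f t ≤ 0) :
    ∀ t ∈ Ioo a b,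
      (deriv (deriv (fun s => Real.log (f s))) t
          + (deriv (fun s => Real.log (f s)) t) ^ 2 + K ≤ 0) ∧
      |deriv (fun s => Real.log (f s)) t| ≤ max (cotK K (t - a)) (cotK K (b - t)) :=
  stmt_8_general K a b hK f hf hfc hfpos hFK
end

section
/- Let f : I → (0,∞) be continuous on a compact interval Ī and FK-concave on the interior (f'' + Kf ≤ 0 in the comparison sense). Then the function G(x) = K f(x)² + |∂f|(x)² is lower semicontinuous on Ī, and hence G attains its minimum on Ī. -/
open Set Filter Topology

/-- The distortion coefficient `σ_K^(λ)(θ) = sn_K(λθ)/sn_K(θ)`. -/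
noncomputable def sigmaK (K lam θ : ℝ) : ℝ := snK K (lam * θ) / snK K θ

/-- `FK`-concavity (`f'' + Kf ≤ 0`) in the comparison sense on the interior of `[a,b]`. -/
def FKConcaveOn (K a b : ℝ) (f : ℝ → ℝ) : Prop :=
  ∀ s ∈ Set.Ioo a b, ∀ t ∈ Set.Ioo a b, s < t →
    (0 < K → t - s < Real.pi / Real.sqrt K) →
    ∀ lam ∈ Set.Icc (0:ℝ) 1,
      sigmaK K (1 - lam) (t - s) * f s + sigmaK K lam (t - s) * f t
        ≤ f ((1 - lam) * s + lam * t)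

/-!
For `K < 0`, concavity of `λ ↦ sinh (λu) - λ sinh u + λ(1-λ)u² sinh u` gives
`σ_K^(λ)(θ) ≥ λ - λ(1-λ)(-K)θ²`, while for `K ≥ 0` simply `σ_K^(λ)(θ) ≥ λ` when `θ < π/√K`.
Hence a nonnegative `FK`-concave `f ≤ M` is semiconcave: `f - 2 max(-K, 0) M x²` is concave on
short intervals, and by continuity this persists up to the endpoints.

For semiconcave `f`, a chord from `x` to `z` of slope at least `r + C|z - x|` forces
`|∂f|(x) ≥ r`. Chord slopes depend continuously on `x`, so a good chord at `x₀` is a good chord at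
all nearby `x`, which makes `|∂f|` lower semicontinuous. Squaring on `[0, ⊤]` and adding the
continuous `K f²` preserve lower semicontinuity, and a lower semicontinuous function attains its
minimum on a compact interval.
-/

open Real

namespace Real

theorem le_sinh_mul {u l : ℝ} (hu : 0 ≤ u) (hl : l ∈ Icc (0 : ℝ) 1) :
    (l - l * (1 - l) * u ^ 2) * sinh u ≤ sinh (l * u) := by
  set A := u ^ 2 * sinh u
  have hsinh : 0 ≤ sinh u := sinh_nonneg_iff.2 hu
  -- concave because `(sinh (l u))'' = u² sinh (l u) ≤ A` for `l ≤ 1`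
  have hconc : ConcaveOn ℝ (Icc 0 1) fun l => sinh (l * u) - l * sinh u + (l - l ^ 2) * A := by
    refine concaveOn_of_hasDerivWithinAt2_nonpos (convex_Icc 0 1) (by fun_prop)
      (f' := fun l => cosh (l * u) * u - sinh u + (1 - 2 * l) * A)
      (f'' := fun l => sinh (l * u) * u * u - 2 * A) (fun l _ => ?_) (fun l _ => ?_) fun l hl => ?_
    · refine HasDerivAt.hasDerivWithinAt ?_
      refine ((((hasDerivAt_id l).mul_const u).sinh.sub ((hasDerivAt_id l).mul_const (sinh u))).add
        (((hasDerivAt_id l).sub (hasDerivAt_pow 2 l)).mul_const A)).congr_deriv ?_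
      simp
    · refine HasDerivAt.hasDerivWithinAt ?_
      refine (((((hasDerivAt_id l).mul_const u).cosh.mul_const u).sub_const (sinh u)).add
        (((hasDerivAt_const l 1).sub ((hasDerivAt_id l).const_mul 2)).mul_const A)).congr_deriv ?_
      simp; ring
    · rw [interior_Icc] at hl
      have : sinh (l * u) ≤ sinh u := sinh_le_sinh.2 (by nlinarith [hl.2])
      nlinarith [mul_nonneg hu hu]
  have h := hconc.2 (left_mem_Icc.2 zero_le_one) (right_mem_Icc.2 zero_le_one) (sub_nonneg.2 hl.2)
    hl.1 (sub_add_cancel 1 l)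
  norm_num at h
  linear_combination h

end Real

theorem le_sigmaK {K θ l : ℝ} (hθ : 0 < θ) (hθK : 0 < K → θ < π / √K) (hl : l ∈ Icc (0 : ℝ) 1) :
    l - l * (1 - l) * max (-K) 0 * θ ^ 2 ≤ sigmaK K l θ := by
  rcases lt_trichotomy K 0 with hK | rfl | hK
  · have hs : 0 < √(-K) := sqrt_pos.2 (neg_pos.2 hK)
    have hu : 0 < √(-K) * θ := mul_pos hs hθ
    have hσ : sigmaK K l θ = sinh (l * (√(-K) * θ)) / sinh (√(-K) * θ) := by
      simp only [sigmaK, snK, if_neg hK.not_gt, if_neg hK.ne, mul_left_comm l]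
      exact div_div_div_cancel_right₀ hs.ne' _ _
    rw [hσ, le_div_iff₀ (sinh_pos_iff.2 hu), max_eq_left (neg_pos.2 hK).le]
    have h := le_sinh_mul hu.le hl
    rw [mul_pow, sq_sqrt (neg_pos.2 hK).le] at h
    linear_combination h
  · simp [sigmaK, snK, hθ.ne']
  · have hs : 0 < √K := sqrt_pos.2 hK
    have hu : √K * θ < π := by rw [mul_comm, ← lt_div_iff₀ hs]; exact hθK hK
    have hσ : sigmaK K l θ = sin (l * (√K * θ)) / sin (√K * θ) := by
      simp only [sigmaK, snK, if_pos hK, mul_left_comm l]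
      exact div_div_div_cancel_right₀ hs.ne' _ _
    rw [hσ, le_div_iff₀ (sin_pos_of_pos_of_lt_pi (mul_pos hs hθ) hu), max_eq_right (by linarith)]
    have h := strictConcaveOn_sin_Icc.concaveOn.2 (left_mem_Icc.2 pi_pos.le)
      ⟨(mul_pos hs hθ).le, hu.le⟩ (sub_nonneg.2 hl.2) hl.1 (sub_add_cancel 1 l)
    simpa using h

/-- Equivalently, `f - C x²` is concave on every subinterval of `s` of length at most `δ`. -/
def SemiconcaveOn (C δ : ℝ) (s : Set ℝ) (f : ℝ → ℝ) : Prop :=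
  ∀ x ∈ s, ∀ y ∈ s, |y - x| ≤ δ → ∀ l ∈ Icc (0 : ℝ) 1,
    (1 - l) * f x + l * f y - C * l * (1 - l) * (y - x) ^ 2 ≤ f ((1 - l) * x + l * y)

namespace SemiconcaveOn

variable {C δ : ℝ} {s : Set ℝ} {f : ℝ → ℝ}

theorem of_lt
    (h : ∀ x ∈ s, ∀ y ∈ s, x < y → y - x ≤ δ → ∀ l ∈ Icc (0 : ℝ) 1,
      (1 - l) * f x + l * f y - C * l * (1 - l) * (y - x) ^ 2 ≤ f ((1 - l) * x + l * y)) :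
    SemiconcaveOn C δ s f := by
  intro x hx y hy hxy l hl
  rcases lt_trichotomy x y with hlt | rfl | hgt
  · exact h x hx y hy hlt ((le_abs_self _).trans hxy) l hl
  · simp [← add_mul]
  · have := h y hy x hx hgt (by rwa [abs_sub_comm, abs_of_pos (sub_pos.2 hgt)] at hxy) (1 - l)
      ⟨sub_nonneg.2 hl.2, sub_le_self _ hl.1⟩
    convert this using 2 <;> ring

theorem Icc_of_Ioo {a b : ℝ} (hab : a < b) (hf : ContinuousOn f (Icc a b))
    (h : SemiconcaveOn C δ (Ioo a b) f) : SemiconcaveOn C δ (Icc a b) f := by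
  intro x hx y hy hxy l hl
  -- contract `[a, b]` into `(a, b)` towards the midpoint, and let the contraction tend to `id`
  set φ : ℝ → ℝ → ℝ := fun ε p => p + ε * ((a + b) / 2 - p)
  have hφ : ∀ p ∈ Icc a b, ∀ ε ∈ Ioc (0 : ℝ) 1, φ ε p ∈ Ioo a b := fun p hp ε hε => by
    simp only [φ, mem_Ioo]
    constructor <;> nlinarith [mul_nonneg (sub_nonneg.2 hε.2) (sub_nonneg.2 hp.1),
      mul_nonneg (sub_nonneg.2 hε.2) (sub_nonneg.2 hp.2), mul_pos hε.1 (sub_pos.2 hab)]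
  have hfφ : ∀ p ∈ Icc a b, ContinuousWithinAt (fun ε => f (φ ε p)) (Ioc 0 1) 0 := fun p hp =>
    (hf p hp).comp_of_eq (by fun_prop) (fun ε hε => Ioo_subset_Icc_self (hφ p hp ε hε))
      (by simp [φ])
  have hmid : (1 - l) * x + l * y ∈ Icc a b := by
    simpa only [smul_eq_mul] using
      convex_Icc a b hx hy (sub_nonneg.2 hl.2) hl.1 (sub_add_cancel 1 l)
  have hlim := ContinuousWithinAt.closure_le (x := (0 : ℝ)) (by simp [closure_Ioc])
    (f := fun ε => (1 - l) * f (φ ε x) + l * f (φ ε y) - C * l * (1 - l) * (φ ε y - φ ε x) ^ 2)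
    (g := fun ε => f (φ ε ((1 - l) * x + l * y)))
    (((continuousWithinAt_const.mul (hfφ x hx)).add (continuousWithinAt_const.mul (hfφ y hy))).sub
      (Continuous.continuousWithinAt (by fun_prop))) (hfφ _ hmid) fun ε hε => ?_
  · simpa [φ] using hlim
  · refine (h _ (hφ x hx ε hε) _ (hφ y hy ε hε) ?_ l hl).trans_eq (congrArg f ?_)
    · calc |φ ε y - φ ε x| = (1 - ε) * |y - x| := by
            rw [show φ ε y - φ ε x = (1 - ε) * (y - x) by simp only [φ]; ring, abs_mul,
              abs_of_nonneg (sub_nonneg.2 hε.2)]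
        _ ≤ |y - x| := mul_le_of_le_one_left (abs_nonneg _) (by linarith [hε.1])
        _ ≤ δ := hxy
    · simp only [φ]; ring

end SemiconcaveOn

theorem FKConcaveOn.semiconcaveOn {K a b M : ℝ} {f : ℝ → ℝ} (hFK : FKConcaveOn K a b f)
    (hf0 : ∀ t ∈ Ioo a b, 0 ≤ f t) (hfM : ∀ t ∈ Ioo a b, f t ≤ M) :
    ∃ δ > 0, SemiconcaveOn (2 * max (-K) 0 * M) δ (Ioo a b) f := by
  refine ⟨π / (√K + 1), by positivity, SemiconcaveOn.of_lt fun x hx y hy hxy hδ l hl => ?_⟩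
  have hθ : 0 < y - x := sub_pos.2 hxy
  have hθK : 0 < K → y - x < π / √K := fun hK =>
    hδ.trans_lt (div_lt_div_of_pos_left pi_pos (sqrt_pos.2 hK) (lt_add_one _))
  have hσx := le_sigmaK hθ hθK (l := 1 - l) ⟨sub_nonneg.2 hl.2, sub_le_self _ hl.1⟩
  have hσy := le_sigmaK hθ hθK hl
  have hε : 0 ≤ l * (1 - l) * max (-K) 0 * (y - x) ^ 2 :=
    mul_nonneg (mul_nonneg (mul_nonneg hl.1 (sub_nonneg.2 hl.2)) (le_max_right _ _)) (sq_nonneg _)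
  linarith [hFK x hx y hy hxy hθK l hl, mul_le_mul_of_nonneg_right hσx (hf0 x hx),
    mul_le_mul_of_nonneg_right hσy (hf0 y hy), mul_le_mul_of_nonneg_left (hfM x hx) hε,
    mul_le_mul_of_nonneg_left (hfM y hy) hε]

section LocalSlope

variable {s : Set ℝ} {f : ℝ → ℝ} {x z : ℝ}

theorem tendsto_segment_nhdsWithin_diff_singleton (hs : Convex ℝ s) (hx : x ∈ s) (hz : z ∈ s)
    (hzx : z ≠ x) : Tendsto (fun l : ℝ => (1 - l) * x + l * z) (𝓝[>] 0) (𝓝[s \ {x}] x) := by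
  refine tendsto_nhdsWithin_iff.2 ⟨?_, ?_⟩
  · have : Continuous fun l : ℝ => (1 - l) * x + l * z := by fun_prop
    simpa using (this.tendsto 0).mono_left nhdsWithin_le_nhds
  · filter_upwards [Ioo_mem_nhdsGT one_pos] with l hl
    have hmem := hs hx hz (sub_nonneg.2 hl.2.le) hl.1.le (sub_add_cancel 1 l)
    refine ⟨by simpa only [smul_eq_mul] using hmem, fun hxl => hzx ?_⟩
    have : l * (z - x) = 0 := by linear_combination (mem_singleton_iff.1 hxl)
    exact sub_eq_zero.1 ((mul_eq_zero.1 this).resolve_left hl.1.ne')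

theorem locSlope_nonneg_s10 (hs : Convex ℝ s) (hs' : s.Nontrivial) (hx : x ∈ s) :
    0 ≤ locSlope f s x := by
  obtain ⟨z, hz, hzx⟩ := hs'.exists_ne x
  have := (tendsto_segment_nhdsWithin_diff_singleton hs hx hz hzx).neBot
  exact le_limsup_of_frequently_le'
    (Frequently.of_forall fun y => EReal.coe_nonneg.2 (by positivity))

theorem frequently_lt_div_of_lt_locSlope {r : ℝ} (hr0 : 0 ≤ r) (hr : (r : EReal) < locSlope f s x) :
    ∃ᶠ y in 𝓝[s \ {x}] x, r < (f y - f x) / |y - x| := by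
  refine (frequently_lt_of_lt_limsup (by isBoundedDefault) hr).mono fun y hy => ?_
  have hy : r < max (f y - f x) 0 / |y - x| := EReal.coe_lt_coe_iff.1 hy
  rcases le_total (f y - f x) 0 with hle | hle
  · simp [max_eq_right hle] at hy; linarith
  · rwa [max_eq_left hle] at hy

theorem SemiconcaveOn.le_locSlope {C δ r : ℝ} (hsc : SemiconcaveOn C δ s f) (hC : 0 ≤ C)
    (hs : Convex ℝ s) (hx : x ∈ s) (hz : z ∈ s) (hzx : z ≠ x) (hδ : |z - x| ≤ δ)
    (hr : r + C * |z - x| ≤ (f z - f x) / |z - x|) : (r : EReal) ≤ locSlope f s x := by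
  have hd : 0 < |z - x| := abs_pos.2 (sub_ne_zero.2 hzx)
  rw [le_div_iff₀ hd, add_mul, mul_assoc, ← sq, sq_abs] at hr
  refine le_limsup_of_frequently_le'
    ((tendsto_segment_nhdsWithin_diff_singleton hs hx hz hzx).frequently (Eventually.frequently ?_))
  filter_upwards [Ioo_mem_nhdsGT one_pos] with l hl
  have hy : |(1 - l) * x + l * z - x| = l * |z - x| := by
    rw [show (1 - l) * x + l * z - x = l * (z - x) by ring, abs_mul, abs_of_pos hl.1]
  have hfy := hsc x hx z hz hδ l ⟨hl.1.le, hl.2.le⟩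
  have : r * (l * |z - x|) ≤ f ((1 - l) * x + l * z) - f x := by
    linarith [mul_le_mul_of_nonneg_left hr hl.1.le,
      mul_nonneg (mul_nonneg hC (sq_nonneg l)) (sq_nonneg (z - x))]
  rw [EReal.coe_le_coe_iff, hy, le_div_iff₀ (mul_pos hl.1 hd)]
  exact this.trans (le_max_left _ _)

theorem SemiconcaveOn.lowerSemicontinuousOn_locSlope {C δ : ℝ}
    (hsc : SemiconcaveOn C δ s f) (hC : 0 ≤ C) (hδ : 0 < δ) (hs : Convex ℝ s)
    (hs' : s.Nontrivial) (hf : ContinuousOn f s) : LowerSemicontinuousOn (locSlope f s) s := by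
  intro x₀ hx₀ c hc
  rcases lt_or_ge c 0 with hc0 | hc0
  · filter_upwards [self_mem_nhdsWithin] with x hx
    exact hc0.trans_le (locSlope_nonneg_s10 hs hs' hx)
  obtain ⟨r₀, hcr₀, hr₀⟩ := EReal.lt_iff_exists_real_btwn.1 hc
  obtain ⟨r, hr₀r, hr⟩ := EReal.lt_iff_exists_real_btwn.1 hr₀
  have hr0 : 0 ≤ r := EReal.coe_nonneg.1 (hc0.trans (hcr₀.trans hr₀r).le)
  have hr₀r : r₀ < r := EReal.coe_lt_coe_iff.1 hr₀r
  obtain ⟨z, ⟨hz, hzx₀ : z ≠ x₀⟩, hzδ, hzr⟩ : ∃ z ∈ s \ {x₀}, |z - x₀| < δ ∧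
      r₀ + C * |z - x₀| < (f z - f x₀) / |z - x₀| := by
    have hd : Tendsto (fun y => |y - x₀|) (𝓝[s \ {x₀}] x₀) (𝓝 0) := by
      simpa using (((continuous_id.sub (continuous_const (y := x₀))).abs).tendsto x₀).mono_left
        nhdsWithin_le_nhds
    have hC : ∀ᶠ y in 𝓝[s \ {x₀}] x₀, r₀ + C * |y - x₀| < r :=
      (tendsto_const_nhds.add (hd.const_mul C)).eventually (gt_mem_nhds (by simpa using hr₀r))
    obtain ⟨z, hzr, hzδ, hzC, hz⟩ := ((frequently_lt_div_of_lt_locSlope hr0 hr).and_eventually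
      ((hd.eventually (gt_mem_nhds hδ)).and (hC.and self_mem_nhdsWithin))).exists
    exact ⟨z, hz, hzδ, hzC.trans hzr⟩
  have hcont : ContinuousWithinAt (fun x => |z - x|) s x₀ := by fun_prop
  have hchord : ContinuousWithinAt (fun x => (f z - f x) / |z - x|) s x₀ :=
    (continuousWithinAt_const.sub (hf x₀ hx₀)).div hcont (abs_pos.2 (sub_ne_zero.2 hzx₀)).ne'
  filter_upwards [self_mem_nhdsWithin, eventually_ne_nhdsWithin hzx₀.symm,
    hcont.eventually (gt_mem_nhds hzδ),
    (continuousWithinAt_const.add (hcont.const_mul C)).eventually_lt hchord hzr]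
    with x hx hxz hδx hrx
  exact hcr₀.trans_le (hsc.le_locSlope hC hs hx hz hxz.symm hδx.le hrx.le)

end LocalSlope

theorem LowerSemicontinuousOn.ereal_mul_self {α : Type*} [TopologicalSpace α] {S : α → EReal}
    {s : Set α} (hS : LowerSemicontinuousOn S s) (h0 : ∀ x ∈ s, 0 ≤ S x) :
    LowerSemicontinuousOn (fun x => S x * S x) s := by
  -- on `s` the square agrees with the monotone continuous map `t ↦ max t 0 * max t 0`
  set g : EReal → EReal := fun t => max t 0 * max t 0
  have hg : Monotone g := fun t u htu =>
    mul_le_mul (max_le_max_right 0 htu) (max_le_max_right 0 htu) (le_max_right _ _)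
      ((le_max_right _ _).trans (max_le_max_right 0 htu))
  have hgS : ∀ x ∈ s, g (S x) = S x * S x := fun x hx => by simp only [g, max_eq_left (h0 x hx)]
  intro x hx c hc
  have hmul : ContinuousAt (fun p : EReal × EReal => p.1 * p.2) (max (S x) 0, max (S x) 0) := by
    have hm : max (S x) 0 ≠ ⊥ := ((le_max_right _ _).trans_lt' EReal.bot_lt_zero).ne'
    apply EReal.continuousAt_mul <;> rcases eq_or_ne (max (S x) 0) 0 with h | h <;> simp [h, hm]
  have hgc : ContinuousAt g (S x) := hmul.comp (f := fun t => (max t 0, max t 0)) (by fun_prop)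
  filter_upwards [hgc.comp_lowerSemicontinuousWithinAt (hS x hx) hg c
    (by simpa [hgS x hx] using hc), self_mem_nhdsWithin] with y hy hys
  simpa [hgS y hys] using hy

theorem LowerSemicontinuousOn.coe_real_add {α : Type*} [TopologicalSpace α] {g : α → ℝ}
    {S : α → EReal} {s : Set α} (hg : ContinuousOn g s) (hS : LowerSemicontinuousOn S s) :
    LowerSemicontinuousOn (fun x => (g x : EReal) + S x) s := fun x hx =>
  ((continuous_coe_real_ereal.comp_continuousOn hg) x hx).lowerSemicontinuousWithinAt.add'
    (hS x hx) (EReal.continuousAt_add (Or.inl (EReal.coe_ne_top _)) (Or.inl (EReal.coe_ne_bot _)))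

/-- For a continuous positive `FK`-concave function `f` on a compact interval, the
function `G = K f² + |∂f|²` is lower semicontinuous, hence attains its minimum. -/
theorem stmt_10 (K a b : ℝ) (hab : a < b) (f : ℝ → ℝ)
    (hfc : ContinuousOn f (Icc a b)) (hfpos : ∀ t ∈ Icc a b, 0 < f t)
    (hFK : FKConcaveOn K a b f) :
    LowerSemicontinuousOn
      (fun x => ((K * (f x) ^ 2 : ℝ) : EReal)
        + locSlope f (Icc a b) x * locSlope f (Icc a b) x) (Icc a b) ∧
    ∃ z ∈ Icc a b, ∀ x ∈ Icc a b,
      ((K * (f z) ^ 2 : ℝ) : EReal) + locSlope f (Icc a b) z * locSlope f (Icc a b) z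
        ≤ ((K * (f x) ^ 2 : ℝ) : EReal)
          + locSlope f (Icc a b) x * locSlope f (Icc a b) x := by
  have ha : a ∈ Icc a b := left_mem_Icc.2 hab.le
  have hIcc : (Icc a b).Nontrivial := ⟨a, ha, b, right_mem_Icc.2 hab.le, hab.ne⟩
  obtain ⟨M, hM⟩ := isCompact_Icc.bddAbove_image hfc
  have hfM : ∀ t ∈ Icc a b, f t ≤ M := fun t ht => hM (mem_image_of_mem f ht)
  have hM0 : 0 ≤ M := (hfpos a ha).le.trans (hfM a ha)
  obtain ⟨δ, hδ, hsc⟩ := hFK.semiconcaveOn (fun t ht => (hfpos t (Ioo_subset_Icc_self ht)).le)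
    fun t ht => hfM t (Ioo_subset_Icc_self ht)
  have hslope := (hsc.Icc_of_Ioo hab hfc).lowerSemicontinuousOn_locSlope (by positivity) hδ
    (convex_Icc a b) hIcc hfc
  have hG : LowerSemicontinuousOn (fun x => ((K * (f x) ^ 2 : ℝ) : EReal)
      + locSlope f (Icc a b) x * locSlope f (Icc a b) x) (Icc a b) :=
    LowerSemicontinuousOn.coe_real_add (continuousOn_const.mul (hfc.pow 2))
      (hslope.ereal_mul_self fun _ => locSlope_nonneg_s10 (convex_Icc a b) hIcc)
  obtain ⟨z, hz, hmin⟩ := hG.exists_isMinOn ⟨a, ha⟩ isCompact_Icc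
  exact ⟨hG, z, hz, fun x hx => hmin hx⟩
end
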